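/- arXiv:2409.16886 — 6 statements merged into one kernel-verified Lean document; each statement's English description precedes it below -/
import Mathlib

section
/- Define S(α) = (1/2)(arcsin(α) + α√(1−α²)) for α ∈ [0,1] and for r ∈ [0,1] define α(r) = (1 − √(1−r²))^{1/2}. Then the function δ(r) := √2·S(α(r)) − r satisfies δ(0) = 0 and δ(r) > 0 for all r ∈ (0,1]. -/
/-!
Substituting `r = α √(2 - α²)` (the inverse of `alphaOf` on `[0, 1]`) turns `δ(r)` into
`deltaInAlpha α = √2 S(α) - α √(2 - α²)`, which vanishes at `0`. Since `S' = √(1 - α²)` and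
`(α √(2 - α²))' = 2 (1 - α²) / √(2 - α²)`, its derivative is positive on `(0, 1)` because
`2 (1 - α²) < 2 - α²` there; so it is strictly increasing on `[0, 1]`.
-/

noncomputable def S (α : ℝ) : ℝ := (Real.arcsin α + α * Real.sqrt (1 - α ^ 2)) / 2

noncomputable def alphaOf (r : ℝ) : ℝ := Real.sqrt (1 - Real.sqrt (1 - r ^ 2))

noncomputable def deltaFun (r : ℝ) : ℝ := Real.sqrt 2 * S (alphaOf r) - r

open Real Set

lemma hasDerivAt_S {x : ℝ} (hx : x ∈ Ioo (-1 : ℝ) 1) : HasDerivAt S (√(1 - x ^ 2)) x := by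
  obtain ⟨hx₁, hx₂⟩ := hx
  have hpos : 0 < 1 - x ^ 2 := by nlinarith
  have hsqrt : HasDerivAt (fun y => √(1 - y ^ 2)) (1 / (2 * √(1 - x ^ 2)) * -(2 * x)) x :=
    (hasDerivAt_sqrt hpos.ne').comp x (by simpa using (hasDerivAt_pow 2 x).const_sub 1)
  refine (((hasDerivAt_arcsin hx₁.ne' hx₂.ne).add ((hasDerivAt_id' x).mul hsqrt)).div_const
    2).congr_deriv ?_
  have hs : √(1 - x ^ 2) ^ 2 = 1 - x ^ 2 := sq_sqrt hpos.le
  field_simp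
  linear_combination -hs

lemma hasDerivAt_mul_sqrt_two_sub_sq {x : ℝ} (hx : x ^ 2 < 2) :
    HasDerivAt (fun y => y * √(2 - y ^ 2)) ((2 - 2 * x ^ 2) / √(2 - x ^ 2)) x := by
  have hpos : 0 < 2 - x ^ 2 := by linarith
  have hsqrt : HasDerivAt (fun y => √(2 - y ^ 2)) (1 / (2 * √(2 - x ^ 2)) * -(2 * x)) x :=
    (hasDerivAt_sqrt hpos.ne').comp x (by simpa using (hasDerivAt_pow 2 x).const_sub 2)
  refine ((hasDerivAt_id' x).mul hsqrt).congr_deriv ?_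
  have hs : √(2 - x ^ 2) ^ 2 = 2 - x ^ 2 := sq_sqrt hpos.le
  field_simp
  linear_combination hs

lemma two_mul_sqrt_one_sub_sq_lt {x : ℝ} (hx₀ : x ≠ 0) (hx₁ : x ^ 2 ≤ 1) :
    2 * √(1 - x ^ 2) < √2 * √(2 - x ^ 2) := by
  refine lt_of_pow_lt_pow_left₀ 2 (by positivity) ?_
  rw [mul_pow, mul_pow, sq_sqrt (by linarith), sq_sqrt zero_le_two, sq_sqrt (by linarith)]
  nlinarith [pow_pos (abs_pos.mpr hx₀) 2, sq_abs x]

noncomputable def deltaInAlpha (α : ℝ) : ℝ := √2 * S α - α * √(2 - α ^ 2)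

lemma deltaInAlpha_zero : deltaInAlpha 0 = 0 := by
  simp [deltaInAlpha, S]

lemma hasDerivAt_deltaInAlpha {x : ℝ} (hx : x ∈ Ioo (-1 : ℝ) 1) :
    HasDerivAt deltaInAlpha (√2 * √(1 - x ^ 2) - (2 - 2 * x ^ 2) / √(2 - x ^ 2)) x :=
  ((hasDerivAt_S hx).const_mul √2).sub
    (hasDerivAt_mul_sqrt_two_sub_sq (by nlinarith [hx.1, hx.2]))

lemma deltaInAlpha_strictMonoOn : StrictMonoOn deltaInAlpha (Icc 0 1) := by
  refine strictMonoOn_of_deriv_pos (convex_Icc 0 1) ?_ fun x hx => ?_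
  · unfold deltaInAlpha S
    fun_prop
  rw [interior_Icc] at hx
  obtain ⟨hx₀, hx₁⟩ := hx
  rw [(hasDerivAt_deltaInAlpha ⟨by linarith, hx₁⟩).deriv]
  have ha : 0 < √(1 - x ^ 2) := sqrt_pos.mpr (by nlinarith)
  have hb : 0 < √(2 - x ^ 2) := sqrt_pos.mpr (by nlinarith)
  have hnum : 2 - 2 * x ^ 2 = 2 * √(1 - x ^ 2) * √(1 - x ^ 2) := by
    rw [mul_assoc, mul_self_sqrt (by nlinarith)]
    ring
  rw [sub_pos, hnum, div_lt_iff₀ hb]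
  linarith [mul_lt_mul_of_pos_left (two_mul_sqrt_one_sub_sq_lt hx₀.ne' (by nlinarith)) ha]

lemma alphaOf_mem_Ioc {r : ℝ} (hr : r ∈ Ioc (0 : ℝ) 1) : alphaOf r ∈ Ioc (0 : ℝ) 1 := by
  obtain ⟨hr₀, hr₁⟩ := hr
  have hlt : √(1 - r ^ 2) < 1 := (sqrt_lt' one_pos).mpr (by nlinarith)
  exact ⟨sqrt_pos.mpr (by linarith), sqrt_le_one.mpr (by linarith [sqrt_nonneg (1 - r ^ 2)])⟩

lemma alphaOf_mul_sqrt_two_sub_sq {r : ℝ} (hr₀ : 0 ≤ r) (hr₁ : r ≤ 1) :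
    alphaOf r * √(2 - alphaOf r ^ 2) = r := by
  have hs : √(1 - r ^ 2) ^ 2 = 1 - r ^ 2 := sq_sqrt (by nlinarith)
  have hα : alphaOf r ^ 2 = 1 - √(1 - r ^ 2) :=
    sq_sqrt (by nlinarith [sqrt_nonneg (1 - r ^ 2)])
  have hsq : (alphaOf r * √(2 - alphaOf r ^ 2)) ^ 2 = r ^ 2 := by
    rw [mul_pow, sq_sqrt (by nlinarith [sqrt_nonneg (1 - r ^ 2)]), hα]
    linear_combination -hs
  exact (sq_eq_sq₀ (mul_nonneg (sqrt_nonneg _) (sqrt_nonneg _)) hr₀).mp hsq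

lemma deltaFun_eq_deltaInAlpha {r : ℝ} (hr₀ : 0 ≤ r) (hr₁ : r ≤ 1) :
    deltaFun r = deltaInAlpha (alphaOf r) := by
  rw [deltaFun, deltaInAlpha, alphaOf_mul_sqrt_two_sub_sq hr₀ hr₁]

theorem stmt0 : deltaFun 0 = 0 ∧ ∀ r ∈ Set.Ioc (0 : ℝ) 1, 0 < deltaFun r := by
  refine ⟨by simp [deltaFun, alphaOf, S], fun r hr => ?_⟩
  obtain ⟨hα₀, hα₁⟩ := alphaOf_mem_Ioc hr
  rw [deltaFun_eq_deltaInAlpha hr.1.le hr.2, ← deltaInAlpha_zero]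
  exact deltaInAlpha_strictMonoOn ⟨le_rfl, zero_le_one⟩ ⟨hα₀.le, hα₁⟩ hα₀
end

section
/- For fixed ξ ∈ ℝ^d with |ξ| = 1, the function (ρ, v, m) ↦ ξᵀ M_{ρ,v,m} ξ, where M_{ρ,v,m} = (m⊗m − ρ(v⊗m + m⊗v) + v⊗v)/(1−ρ²), is convex on (−1,1) × ℝ^d × ℝ^d. -/
/-!
Since `1 - ρ² = (1 + ρ)(1 - ρ)`, partial fractions give
`(b² - 2ρab + a²)/(1 - ρ²) = (a + b)²/(2(1 + ρ)) + (a - b)²/(2(1 - ρ))`,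
a sum of two copies of the jointly convex function `(x, y) ↦ x²/y` (on `y > 0`) composed
with affine maps. The quadratic form `ξᵀ M ξ` is this expression evaluated at
`a = ⟪ξ, v⟫`, `b = ⟪ξ, m⟫`, a linear change of variables.
-/

open Set

theorem convexOn_sq_div : ConvexOn ℝ {p : ℝ × ℝ | 0 < p.2} fun p => p.1 ^ 2 / p.2 := by
  refine ⟨convex_halfSpace_gt (LinearMap.snd ℝ ℝ ℝ).isLinear 0, ?_⟩
  rintro ⟨x, P⟩ (hP : 0 < P) ⟨y, Q⟩ (hQ : 0 < Q) a b ha hb hab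
  simp only [Prod.smul_mk, Prod.mk_add_mk, smul_eq_mul]
  have hden : 0 < a * P + b * Q := by
    rcases ha.lt_or_eq with ha | rfl
    · positivity
    · simpa [show b = 1 by linarith] using hQ
  rw [mul_div_assoc', mul_div_assoc', div_add_div _ _ hP.ne' hQ.ne',
    div_le_div_iff₀ hden (by positivity)]
  -- Cauchy–Schwarz in Sedrakyan's form; the slack is `a b (x Q - y P)²`.
  nlinarith [mul_nonneg (mul_nonneg ha hb) (sq_nonneg (x * Q - y * P)), mul_pos hP hQ]

theorem convexOn_sq_div_affineMap {E : Type*} [AddCommGroup E] [Module ℝ E] (f g : E →ᵃ[ℝ] ℝ) :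
    ConvexOn ℝ {x | 0 < g x} fun x => f x ^ 2 / g x :=
  convexOn_sq_div.comp_affineMap (f.prod g)

theorem quadForm_div_eq {ρ a b : ℝ} (hρ : ρ ∈ Ioo (-1 : ℝ) 1) :
    (b ^ 2 - 2 * ρ * a * b + a ^ 2) / (1 - ρ ^ 2)
      = (a + b) ^ 2 / (2 * (1 + ρ)) + (a - b) ^ 2 / (2 * (1 - ρ)) := by
  have h₁ : 1 + ρ ≠ 0 := by linarith [hρ.1]
  have h₂ : 1 - ρ ≠ 0 := by linarith [hρ.2]
  rw [show 1 - ρ ^ 2 = (1 + ρ) * (1 - ρ) by ring]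
  field_simp
  ring

theorem convexOn_quadForm_div :
    ConvexOn ℝ (Ioo (-1 : ℝ) 1 ×ˢ (univ : Set (ℝ × ℝ)))
      fun p : ℝ × ℝ × ℝ => (p.2.2 ^ 2 - 2 * p.1 * p.2.1 * p.2.2 + p.2.1 ^ 2) / (1 - p.1 ^ 2) := by
  have hS : Convex ℝ (Ioo (-1 : ℝ) 1 ×ˢ (univ : Set (ℝ × ℝ))) := (convex_Ioo _ _).prod convex_univ
  let ρ : ℝ × ℝ × ℝ →ᵃ[ℝ] ℝ := (LinearMap.fst ℝ ℝ (ℝ × ℝ)).toAffineMap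
  let a : ℝ × ℝ × ℝ →ᵃ[ℝ] ℝ := ((LinearMap.fst ℝ ℝ ℝ).comp (LinearMap.snd ℝ ℝ (ℝ × ℝ))).toAffineMap
  let b : ℝ × ℝ × ℝ →ᵃ[ℝ] ℝ := ((LinearMap.snd ℝ ℝ ℝ).comp (LinearMap.snd ℝ ℝ (ℝ × ℝ))).toAffineMap
  let one : ℝ × ℝ × ℝ →ᵃ[ℝ] ℝ := AffineMap.const ℝ _ 1
  have hplus := (convexOn_sq_div_affineMap (a + b) ((2 : ℝ) • (one + ρ))).subset
    (fun p hp => show 0 < 2 * (1 + p.1) by linarith [hp.1.1]) hS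
  have hminus := (convexOn_sq_div_affineMap (a - b) ((2 : ℝ) • (one - ρ))).subset
    (fun p hp => show 0 < 2 * (1 - p.1) by linarith [hp.1.2]) hS
  refine (hplus.add hminus).congr fun p hp => ?_
  simp [one, ρ, a, b, quadForm_div_eq hp.1, mul_add]

theorem stmt6_general (d : ℕ) (ξ : EuclideanSpace ℝ (Fin d)) :
    ConvexOn ℝ
      ((Set.Ioo (-1 : ℝ) 1) ×ˢ
        (Set.univ : Set (EuclideanSpace ℝ (Fin d) × EuclideanSpace ℝ (Fin d))))
      (fun p : ℝ × EuclideanSpace ℝ (Fin d) × EuclideanSpace ℝ (Fin d) =>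
        ((inner ℝ ξ p.2.2 : ℝ) ^ 2
          - 2 * p.1 * (inner ℝ ξ p.2.1 : ℝ) * (inner ℝ ξ p.2.2 : ℝ)
          + (inner ℝ ξ p.2.1 : ℝ) ^ 2) / (1 - p.1 ^ 2)) :=
  convexOn_quadForm_div.comp_linearMap
    (LinearMap.id.prodMap ((innerₛₗ ℝ ξ).prodMap (innerₛₗ ℝ ξ)))

theorem stmt6 (d : ℕ) (ξ : EuclideanSpace ℝ (Fin d)) (hξ : ‖ξ‖ = 1) :
    ConvexOn ℝ
      ((Set.Ioo (-1 : ℝ) 1) ×ˢ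
        (Set.univ : Set (EuclideanSpace ℝ (Fin d) × EuclideanSpace ℝ (Fin d))))
      (fun p : ℝ × EuclideanSpace ℝ (Fin d) × EuclideanSpace ℝ (Fin d) =>
        ((inner ℝ ξ p.2.2 : ℝ) ^ 2
          - 2 * p.1 * (inner ℝ ξ p.2.1 : ℝ) * (inner ℝ ξ p.2.2 : ℝ)
          + (inner ℝ ξ p.2.1 : ℝ) ^ 2) / (1 - p.1 ^ 2)) :=
  stmt6_general d ξ
end

section
/- Let K = {(ρ,v,m,e) : |ρ| ≤ 1, m = ρv, |v|² = e} ⊂ ℝ × ℝ^d × ℝ^d × ℝ. If z = (ρ,v,m,e) lies in the closed convex hull of K and the first component of v vanishes (v₁ = 0), then m₁² ≤ e(1 − ρ²). -/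
/-- The constraint set `K = {(ρ,v,m,e) : |ρ| ≤ 1, m = ρv, |v|² = e}`. -/
def Kset (d : ℕ) :
    Set (ℝ × EuclideanSpace ℝ (Fin d) × EuclideanSpace ℝ (Fin d) × ℝ) :=
  {p | |p.1| ≤ 1 ∧ p.2.2.1 = p.1 • p.2.1 ∧ ‖p.2.1‖ ^ 2 = p.2.2.2}

/-!
For `p = (ρ, v, m, e) ∈ K` and reals `a, b`, substituting `mᵢ = ρ vᵢ` and `vᵢ² ≤ e` gives
`a² + b² - (4a mᵢ + 4b vᵢ - 2abρ - 4e) ≥ a² (1 - ρ²) + (aρ + b - 2vᵢ)² ≥ 0`.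
The left side is affine in `p`, so the inequality passes to the closed convex hull of `K`.
At a point `z` of the hull with `v₁ = 0`, the choice `a = 2t`, `b = -2tρ(z)` turns it into
`(1 - ρ²) t² - 2 m₁ t + e ≥ 0` for all `t`, and the discriminant of this quadratic is `≤ 0`.
-/

theorem le_of_mem_closure_convexHull {E : Type*} [TopologicalSpace E] [AddCommGroup E]
    [Module ℝ E] {s : Set E} {f : E → ℝ} {c : ℝ} (hf : IsLinearMap ℝ f) (hfc : Continuous f)
    (hs : ∀ p ∈ s, f p ≤ c) {z : E} (hz : z ∈ closure (convexHull ℝ s)) : f z ≤ c :=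
  closure_minimal (convexHull_min hs (convex_halfSpace_le hf c))
    (isClosed_le hfc continuous_const) hz

theorem EuclideanSpace.sq_apply_le_norm_sq {ι : Type*} [Fintype ι] (v : EuclideanSpace ℝ ι)
    (i : ι) : v i ^ 2 ≤ ‖v‖ ^ 2 := by
  simpa only [Real.norm_eq_abs, sq_abs] using
    pow_le_pow_left₀ (norm_nonneg _) (PiLp.norm_apply_le v i) 2

theorem sq_le_mul_of_forall_two_mul_le {m A e : ℝ} (h : ∀ t : ℝ, 2 * t * m ≤ A * t ^ 2 + e) :
    m ^ 2 ≤ e * A := by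
  have hdisc := discrim_le_zero (a := A) (b := -(2 * m)) (c := e) fun t => by
    linarith [h t]
  rw [discrim] at hdisc
  linarith

namespace Kset

variable {d : ℕ}

def testFunctional (i : Fin d) (a b : ℝ)
    (p : ℝ × EuclideanSpace ℝ (Fin d) × EuclideanSpace ℝ (Fin d) × ℝ) : ℝ :=
  4 * a * p.2.2.1 i + 4 * b * p.2.1 i - 2 * a * b * p.1 - 4 * p.2.2.2

theorem isLinearMap_testFunctional (i : Fin d) (a b : ℝ) :
    IsLinearMap ℝ (testFunctional i a b) where
  map_add p q := by
    simp only [testFunctional, Prod.fst_add, Prod.snd_add, PiLp.add_apply]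
    ring
  map_smul c p := by
    simp only [testFunctional, Prod.smul_fst, Prod.smul_snd, PiLp.smul_apply, smul_eq_mul]
    ring

theorem continuous_testFunctional (i : Fin d) (a b : ℝ) : Continuous (testFunctional i a b) := by
  unfold testFunctional
  fun_prop

theorem testFunctional_le {p : ℝ × EuclideanSpace ℝ (Fin d) × EuclideanSpace ℝ (Fin d) × ℝ}
    (hp : p ∈ Kset d) (i : Fin d) (a b : ℝ) : testFunctional i a b p ≤ a ^ 2 + b ^ 2 := by
  obtain ⟨hρ, hm, he⟩ := hp
  have hρ_sq : p.1 ^ 2 ≤ 1 := by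
    simpa only [one_pow, sq_abs] using pow_le_pow_left₀ (abs_nonneg _) hρ 2
  have hmi : p.2.2.1 i = p.1 * p.2.1 i := by rw [hm]; rfl
  have hvi : p.2.1 i ^ 2 ≤ p.2.2.2 := he ▸ EuclideanSpace.sq_apply_le_norm_sq p.2.1 i
  rw [testFunctional, hmi]
  nlinarith [sq_nonneg (a * p.1 + b - 2 * p.2.1 i), mul_le_mul_of_nonneg_left hρ_sq (sq_nonneg a)]

theorem testFunctional_le_of_mem_closure_convexHull
    {z : ℝ × EuclideanSpace ℝ (Fin d) × EuclideanSpace ℝ (Fin d) × ℝ}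
    (hz : z ∈ closure (convexHull ℝ (Kset d))) (i : Fin d) (a b : ℝ) :
    testFunctional i a b z ≤ a ^ 2 + b ^ 2 :=
  le_of_mem_closure_convexHull (isLinearMap_testFunctional i a b)
    (continuous_testFunctional i a b) (fun _ hp => testFunctional_le hp i a b) hz

end Kset

theorem stmt8 (d : ℕ) (hd : 0 < d)
    (z : ℝ × EuclideanSpace ℝ (Fin d) × EuclideanSpace ℝ (Fin d) × ℝ)
    (hz : z ∈ closure (convexHull ℝ (Kset d)))
    (hv1 : z.2.1 ⟨0, hd⟩ = 0) :
    (z.2.2.1 ⟨0, hd⟩) ^ 2 ≤ z.2.2.2 * (1 - z.1 ^ 2) := by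
  refine sq_le_mul_of_forall_two_mul_le fun t => ?_
  have h := Kset.testFunctional_le_of_mem_closure_convexHull hz ⟨0, hd⟩ (2 * t) (-(2 * t * z.1))
  rw [Kset.testFunctional, hv1] at h
  linarith
end

section
/- Let K₁ = {(ρ,v,m,e) ∈ ℝ × ℝ^d × ℝ^d × ℝ : |ρ| < 1, |m − ρv|² = (e − |v|²)(1 − ρ²)}. For z = (ρ,v,m,e) ∈ K₁, set ẑ = (1, (m−ρv)/(1−ρ²), (v−ρm)/(1−ρ²), |m+v|²/((1−ρ²)(1+ρ)) − e/(1−ρ)). Then z + sẑ ∈ K for both s = 1−ρ and s = −1−ρ, where K = {(ρ,v,m,e) : |ρ| ≤ 1, m = ρv, |v|² = e}. In particular K₁ is contained in the convex hull of K. -/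
/-- The direction `ẑ` of the segment through `z = (ρ, v, m, e)`. -/
noncomputable def kOneDirection {E : Type*} [NormedAddCommGroup E] [InnerProductSpace ℝ E]
    (ρ e : ℝ) (v m : E) : ℝ × E × E × ℝ :=
  (1, (1 - ρ ^ 2)⁻¹ • (m - ρ • v), (1 - ρ ^ 2)⁻¹ • (v - ρ • m),
    ‖m + v‖ ^ 2 / ((1 - ρ ^ 2) * (1 + ρ)) - e / (1 - ρ))

theorem mem_convexHull_of_add_smul_mem {E : Type*} [AddCommGroup E] [Module ℝ E] {S : Set E}
    {x y : E} {s t : ℝ} (hs : s < 0) (ht : 0 < t) (hxs : x + s • y ∈ S) (hxt : x + t • y ∈ S) :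
    x ∈ convexHull ℝ S := by
  have hts : 0 < t - s := by linarith
  have hx : (t / (t - s)) • (x + s • y) + (-s / (t - s)) • (x + t • y) = x := by
    match_scalars <;> field_simp <;> ring
  rw [← hx]
  exact convex_convexHull ℝ S (subset_convexHull ℝ S hxs) (subset_convexHull ℝ S hxt)
    (by positivity) (div_nonneg (by linarith) hts.le) (by field_simp; ring)

section Direction

variable {E : Type*} [NormedAddCommGroup E] [InnerProductSpace ℝ E]

theorem one_add_mul_norm_sub_sq_add_one_sub_mul_norm_add_sq (ρ : ℝ) (v m : E) :
    (1 + ρ) * ‖v - m‖ ^ 2 + (1 - ρ) * ‖v + m‖ ^ 2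
      = 2 * (‖m - ρ • v‖ ^ 2 + (1 - ρ ^ 2) * ‖v‖ ^ 2) := by
  rw [norm_sub_sq_real, norm_add_sq_real, norm_sub_sq_real, real_inner_smul_right, norm_smul,
    real_inner_comm, Real.norm_eq_abs, mul_pow, sq_abs]
  ring

variable {ρ : ℝ} (e : ℝ) (v m : E)

theorem add_one_sub_smul_kOneDirection (h₁ : 1 - ρ ≠ 0) (h₂ : 1 + ρ ≠ 0) :
    (ρ, v, m, e) + (1 - ρ) • kOneDirection ρ e v m
      = (1, (1 + ρ)⁻¹ • (m + v), (1 + ρ)⁻¹ • (m + v), ‖(1 + ρ)⁻¹ • (m + v)‖ ^ 2) := by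
  simp only [kOneDirection, Prod.smul_mk, Prod.mk_add_mk, Prod.mk.injEq,
    show 1 - ρ ^ 2 = (1 - ρ) * (1 + ρ) by ring]
  refine ⟨by ring, ?_, ?_, ?_⟩
  · match_scalars <;> field_simp
    ring
  · match_scalars <;> field_simp
    ring
  · rw [norm_smul, mul_pow, Real.norm_eq_abs, sq_abs, smul_eq_mul]
    field_simp
    ring

theorem add_neg_one_sub_smul_kOneDirection (h₁ : 1 - ρ ≠ 0) (h₂ : 1 + ρ ≠ 0)
    (hK₁ : ‖m - ρ • v‖ ^ 2 = (e - ‖v‖ ^ 2) * (1 - ρ ^ 2)) :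
    (ρ, v, m, e) + (-1 - ρ) • kOneDirection ρ e v m
      = (-1, (1 - ρ)⁻¹ • (v - m), -((1 - ρ)⁻¹ • (v - m)), ‖(1 - ρ)⁻¹ • (v - m)‖ ^ 2) := by
  have key := one_add_mul_norm_sub_sq_add_one_sub_mul_norm_add_sq ρ v m
  simp only [kOneDirection, Prod.smul_mk, Prod.mk_add_mk, Prod.mk.injEq,
    show 1 - ρ ^ 2 = (1 - ρ) * (1 + ρ) by ring]
  refine ⟨by ring, ?_, ?_, ?_⟩
  · match_scalars <;> field_simp <;> ring
  · match_scalars <;> field_simp <;> ring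
  · rw [norm_smul, mul_pow, Real.norm_eq_abs, sq_abs, smul_eq_mul, add_comm m v]
    field_simp
    linear_combination -(1 + ρ) * key - 2 * (1 + ρ) * hK₁

end Direction

theorem stmt9 (d : ℕ) (ρ e : ℝ) (v m : EuclideanSpace ℝ (Fin d))
    (hρ : |ρ| < 1)
    (hK1 : ‖m - ρ • v‖ ^ 2 = (e - ‖v‖ ^ 2) * (1 - ρ ^ 2)) :
    ((ρ, v, m, e) + (1 - ρ) •
        ((1 : ℝ), (1 - ρ ^ 2)⁻¹ • (m - ρ • v), (1 - ρ ^ 2)⁻¹ • (v - ρ • m),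
          ‖m + v‖ ^ 2 / ((1 - ρ ^ 2) * (1 + ρ)) - e / (1 - ρ)) ∈ Kset d) ∧
    ((ρ, v, m, e) + (-1 - ρ) •
        ((1 : ℝ), (1 - ρ ^ 2)⁻¹ • (m - ρ • v), (1 - ρ ^ 2)⁻¹ • (v - ρ • m),
          ‖m + v‖ ^ 2 / ((1 - ρ ^ 2) * (1 + ρ)) - e / (1 - ρ)) ∈ Kset d) ∧
    (ρ, v, m, e) ∈ convexHull ℝ (Kset d) := by
  obtain ⟨hρ_gt, hρ_lt⟩ := abs_lt.mp hρ
  have h₁ : 1 - ρ ≠ 0 := by linarith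
  have h₂ : 1 + ρ ≠ 0 := by linarith
  have hplus : (ρ, v, m, e) + (1 - ρ) • kOneDirection ρ e v m ∈ Kset d := by
    rw [add_one_sub_smul_kOneDirection e v m h₁ h₂]
    exact ⟨by norm_num, (one_smul ℝ _).symm, rfl⟩
  have hminus : (ρ, v, m, e) + (-1 - ρ) • kOneDirection ρ e v m ∈ Kset d := by
    rw [add_neg_one_sub_smul_kOneDirection e v m h₁ h₂ hK1]
    exact ⟨by norm_num, (neg_one_smul ℝ _).symm, rfl⟩
  exact ⟨hplus, hminus, mem_convexHull_of_add_smul_mem (by linarith) (by linarith) hminus hplus⟩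
end

section
/- Let a > 0, G : ℝ → [0,∞) continuous and even, and let f : [−a,a] → ℝ be Lipschitz with ess inf f' > 0 and f(−a) = −f(a). Let f^o be the inverse of g := (1/2)f^{−1} + (1/2)(f^{−1})_*, where h_*(x) := −h(−x). Then ∫_{−a}^{a} (f^o)'(x)² G(f^o(x)) dx ≤ ∫_{−a}^{a} f'(x)² G(f(x)) dx, with equality (when G > 0 a.e.) if and only if f is odd, i.e. f = f^o. -/
/-!
Put `b = f a` and read both energies in the coordinate `y = f x` (resp. `y = fᵒ x`): they become
`∫_{-b}^{b} G y / (f⁻¹)' y` and `∫_{-b}^{b} G y / g' y`, where `g = (f⁻¹ + (f⁻¹)_*) / 2` is the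
inverse of `fᵒ`, so `g' y = ((f⁻¹)' y + (f⁻¹)' (-y)) / 2`. By convexity of `z ↦ 1 / z`,
`1 / g' y` is at most the mean of `1 / (f⁻¹)' y` and `1 / (f⁻¹)' (-y)`, and since `G` is even
both halves integrate to the energy of `f`. Equality with `G > 0` a.e. forces `(f⁻¹)'` to be
even a.e., so the Lipschitz (hence absolutely continuous) function `f⁻¹` is odd, `g = f⁻¹` and
`fᵒ = f`. All maps involved are Lipschitz with Lipschitz inverses, which is what makes the change
of variables and the fundamental theorem of calculus available for a.e. derivatives.
-/

open Set MeasureTheory Filter Topology NNReal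

theorem neg_mem_Icc_neg {b y : ℝ} (hy : y ∈ Icc (-b) b) : -y ∈ Icc (-b) b :=
  ⟨neg_le_neg hy.2, neg_le.1 hy.1⟩

theorem LipschitzOnWith.volume_image_eq_zero {K : ℝ≥0} {u : ℝ → ℝ} {s N : Set ℝ}
    (hu : LipschitzOnWith K u s) (hN : N ⊆ s) (h0 : volume N = 0) : volume (u '' N) = 0 := by
  have h := (hu.mono hN).hausdorffMeasure_image_le zero_le_one
  rw [ENNReal.rpow_one, hausdorffMeasure_real, h0, mul_zero] at h
  exact le_antisymm h bot_le

theorem LipschitzOnWith.ae_restrict_comp_rightInvOn {K : ℝ≥0} {u v : ℝ → ℝ} {s t : Set ℝ}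
    (hu : LipschitzOnWith K u s) (hs : MeasurableSet s) (ht : MeasurableSet t)
    (hv : MapsTo v t s) (huv : RightInvOn v u t) {P : ℝ → Prop}
    (hP : ∀ᵐ x ∂volume.restrict s, P x) : ∀ᵐ y ∂volume.restrict t, P (v y) := by
  rw [ae_restrict_iff' hs, ae_iff] at hP
  rw [ae_restrict_iff' ht, ae_iff]
  refine measure_mono_null ?_
    (hu.volume_image_eq_zero (fun x hx => (Classical.not_imp.1 hx).1) hP)
  intro y hy
  obtain ⟨hyt, hPy⟩ := Classical.not_imp.1 hy
  exact ⟨v y, Classical.not_imp.2 ⟨hv hyt, hPy⟩, huv hyt⟩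

theorem ae_restrict_Icc_comp_neg {b : ℝ} {P : ℝ → Prop}
    (hP : ∀ᵐ y ∂volume.restrict (Icc (-b) b), P y) :
    ∀ᵐ y ∂volume.restrict (Icc (-b) b), P (-y) :=
  (LipschitzWith.id.neg.lipschitzOnWith).ae_restrict_comp_rightInvOn measurableSet_Icc
    measurableSet_Icc (fun _ => neg_mem_Icc_neg) (fun y _ => neg_neg y) hP

theorem ae_restrict_Icc_mem_nhds (p q : ℝ) : ∀ᵐ x ∂volume.restrict (Icc p q), Icc p q ∈ 𝓝 x := by
  rw [← ae_restrict_congr_set Ioo_ae_eq_Icc]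
  filter_upwards [ae_restrict_mem measurableSet_Ioo] with x hx using Icc_mem_nhds hx.1 hx.2

theorem exists_measurableSet_forall_of_ae_restrict {α : Type*} [MeasurableSpace α]
    {μ : Measure α} {s : Set α} (hs : MeasurableSet s) {P : α → Prop}
    (hP : ∀ᵐ x ∂μ.restrict s, P x) : ∃ t ⊆ s, MeasurableSet t ∧ t =ᵐ[μ] s ∧ ∀ x ∈ t, P x := by
  rw [ae_restrict_iff' hs, ae_iff] at hP
  obtain ⟨N, hN, hNm, hN0⟩ := exists_measurable_superset_of_null hP
  refine ⟨s \ N, sdiff_subset, hs.diff hNm, sdiff_null_ae_eq_self hN0, fun x hx => ?_⟩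
  by_contra h
  exact hx.2 (hN (Classical.not_imp.2 ⟨hx.1, h⟩))

section LipschitzOnIcc

variable {K : ℝ≥0} {u u' : ℝ → ℝ} {p q : ℝ}

theorem LipschitzOnWith.exists_ae_eq_Icc_hasDerivWithinAt (hpq : p ≤ q)
    (hu : LipschitzOnWith K u (Icc p q)) (hmono : MonotoneOn u (Icc p q))
    (hu' : ∀ᵐ x ∂volume.restrict (Icc p q), HasDerivAt u (u' x) x) :
    ∃ t ⊆ Icc p q, MeasurableSet t ∧ t =ᵐ[volume] Icc p q ∧
      u '' t =ᵐ[volume] Icc (u p) (u q) ∧ ∀ x ∈ t, HasDerivWithinAt u (u' x) t x := by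
  obtain ⟨t, hts, htm, hteq, hder⟩ :=
    exists_measurableSet_forall_of_ae_restrict measurableSet_Icc hu'
  refine ⟨t, hts, htm, hteq, ae_eq_set.2 ⟨?_, ?_⟩, fun x hx => (hder x hx).hasDerivWithinAt⟩
  · rw [← ContinuousOn.image_Icc_of_monotoneOn hpq hu.continuousOn hmono]
    simp [sdiff_eq_bot_iff.2 (image_mono hts)]
  · rw [← ContinuousOn.image_Icc_of_monotoneOn hpq hu.continuousOn hmono]
    refine measure_mono_null ?_ (hu.volume_image_eq_zero sdiff_subset (ae_eq_set.1 hteq).2)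
    rintro _ ⟨⟨x, hx, rfl⟩, hxt⟩
    exact ⟨x, ⟨hx, fun h => hxt ⟨x, h, rfl⟩⟩, rfl⟩

theorem LipschitzOnWith.integral_Icc_image (hpq : p ≤ q) (hu : LipschitzOnWith K u (Icc p q))
    (hmono : MonotoneOn u (Icc p q))
    (hu' : ∀ᵐ x ∂volume.restrict (Icc p q), HasDerivAt u (u' x) x) (φ : ℝ → ℝ) :
    ∫ y in Icc (u p) (u q), φ y = ∫ x in Icc p q, u' x * φ (u x) := by
  obtain ⟨t, hts, htm, hteq, himg, hder⟩ := hu.exists_ae_eq_Icc_hasDerivWithinAt hpq hmono hu'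
  rw [← setIntegral_congr_set himg, ← setIntegral_congr_set hteq]
  exact integral_image_eq_integral_deriv_smul_of_monotoneOn htm hder (hmono.mono hts) φ

theorem LipschitzOnWith.integrableOn_Icc_image_iff (hpq : p ≤ q)
    (hu : LipschitzOnWith K u (Icc p q)) (hmono : MonotoneOn u (Icc p q))
    (hu' : ∀ᵐ x ∂volume.restrict (Icc p q), HasDerivAt u (u' x) x) (φ : ℝ → ℝ) :
    IntegrableOn φ (Icc (u p) (u q)) ↔ IntegrableOn (fun x => u' x * φ (u x)) (Icc p q) := by
  obtain ⟨t, hts, htm, hteq, himg, hder⟩ := hu.exists_ae_eq_Icc_hasDerivWithinAt hpq hmono hu'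
  rw [← integrableOn_congr_set_ae himg, ← integrableOn_congr_set_ae hteq]
  exact integrableOn_image_iff_integrableOn_deriv_smul_of_monotoneOn htm hder (hmono.mono hts) φ

theorem LipschitzOnWith.integrableOn_deriv_sq_mul_comp (hu : LipschitzOnWith K u (Icc p q))
    (hu' : ∀ᵐ x ∂volume.restrict (Icc p q), HasDerivAt u (u' x) x) {G : ℝ → ℝ}
    (hG : Continuous G) : IntegrableOn (fun x => u' x ^ 2 * G (u x)) (Icc p q) := by
  have hGu : ContinuousOn (G ∘ u) (Icc p q) := hG.comp_continuousOn hu.continuousOn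
  obtain ⟨M, hM⟩ := isCompact_Icc.exists_bound_of_continuousOn hGu
  have hu'm : AEStronglyMeasurable u' (volume.restrict (Icc p q)) :=
    (measurable_deriv u).aestronglyMeasurable.congr <| by
      filter_upwards [hu'] with x hx using hx.deriv
  refine IntegrableOn.of_bound measure_Icc_lt_top
    ((hu'm.pow 2).mul (hGu.aestronglyMeasurable measurableSet_Icc)) (K ^ 2 * M) ?_
  filter_upwards [hu', ae_restrict_Icc_mem_nhds p q, ae_restrict_mem measurableSet_Icc]
    with x hx hnhds hxI
  rw [norm_mul, norm_pow]
  exact mul_le_mul (pow_le_pow_left₀ (norm_nonneg _) (hx.le_of_lipschitzOn hnhds hu) 2)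
    (hM x hxI) (norm_nonneg _) (by positivity)

variable {v : ℝ → ℝ}

theorem LipschitzOnWith.integral_deriv_sq_mul_comp (hpq : p ≤ q)
    (hu : LipschitzOnWith K u (Icc p q)) (hmono : MonotoneOn u (Icc p q))
    (hu' : ∀ᵐ x ∂volume.restrict (Icc p q), HasDerivAt u (u' x) x)
    (hvu : LeftInvOn v u (Icc p q)) (G : ℝ → ℝ) :
    ∫ x in Icc p q, u' x ^ 2 * G (u x) = ∫ y in Icc (u p) (u q), u' (v y) * G y := by
  rw [hu.integral_Icc_image hpq hmono hu']
  refine setIntegral_congr_fun measurableSet_Icc fun x hx => ?_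
  simp only [hvu hx]
  ring

theorem LipschitzOnWith.integrableOn_deriv_comp_mul (hpq : p ≤ q)
    (hu : LipschitzOnWith K u (Icc p q)) (hmono : MonotoneOn u (Icc p q))
    (hu' : ∀ᵐ x ∂volume.restrict (Icc p q), HasDerivAt u (u' x) x)
    (hvu : LeftInvOn v u (Icc p q)) {G : ℝ → ℝ} (hG : Continuous G) :
    IntegrableOn (fun y => u' (v y) * G y) (Icc (u p) (u q)) := by
  rw [hu.integrableOn_Icc_image_iff hpq hmono hu']
  refine (hu.integrableOn_deriv_sq_mul_comp hu' hG).congr_fun (fun x hx => ?_) measurableSet_Icc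
  simp only [hvu hx]
  ring

theorem setIntegral_deriv_sq_mul_comp_congr {v' : ℝ → ℝ} (huv : EqOn u v (Icc p q))
    (hu' : ∀ᵐ x ∂volume.restrict (Icc p q), HasDerivAt u (u' x) x)
    (hv' : ∀ᵐ x ∂volume.restrict (Icc p q), HasDerivAt v (v' x) x) (G : ℝ → ℝ) :
    ∫ x in Icc p q, u' x ^ 2 * G (u x) = ∫ x in Icc p q, v' x ^ 2 * G (v x) := by
  refine integral_congr_ae ?_
  filter_upwards [hu', hv', ae_restrict_Icc_mem_nhds p q] with x hu hv hx
  rw [(hu.congr_of_eventuallyEq (eventually_of_mem hx huv.symm)).unique hv,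
    huv (mem_of_mem_nhds hx)]

theorem LipschitzOnWith.mul_sub_le_sub {c : ℝ} (hu : LipschitzOnWith K u (Icc p q))
    (hu' : ∀ᵐ x ∂volume.restrict (Icc p q), HasDerivAt u (u' x) x ∧ c ≤ u' x) :
    ∀ x₁ ∈ Icc p q, ∀ x₂ ∈ Icc p q, x₁ ≤ x₂ → c * (x₂ - x₁) ≤ u x₂ - u x₁ := by
  intro x₁ h₁ x₂ h₂ h₁₂
  have hsub : Icc x₁ x₂ ⊆ Icc p q := Icc_subset_Icc h₁.1 h₂.2
  have hac : AbsolutelyContinuousOnInterval u x₁ x₂ :=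
    (uIcc_of_le h₁₂ ▸ hu.mono hsub).absolutelyContinuousOnInterval
  rw [← hac.integral_deriv_eq_sub]
  calc c * (x₂ - x₁) = ∫ _ in x₁..x₂, c := by simp [mul_comm]
    _ ≤ ∫ x in x₁..x₂, deriv u x :=
      intervalIntegral.integral_mono_ae_restrict h₁₂ intervalIntegrable_const
        hac.intervalIntegrable_deriv <| by
          filter_upwards [ae_restrict_of_ae_restrict_of_subset hsub hu'] with x hx
          exact hx.1.deriv ▸ hx.2

end LipschitzOnIcc

section Inverse

variable {u v : ℝ → ℝ} {s t : Set ℝ} {K : ℝ≥0}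

theorem strictMonoOn_of_sub_le_mul_sub
    (hu : ∀ x₁ ∈ s, ∀ x₂ ∈ s, x₁ ≤ x₂ → x₂ - x₁ ≤ K * (u x₂ - u x₁)) : StrictMonoOn u s := by
  intro x₁ h₁ x₂ h₂ h₁₂
  by_contra h
  have := hu x₁ h₁ x₂ h₂ h₁₂.le
  nlinarith [K.coe_nonneg, not_lt.1 h]

theorem lipschitzOnWith_rightInvOn_of_sub_le_mul_sub
    (hu : ∀ x₁ ∈ s, ∀ x₂ ∈ s, x₁ ≤ x₂ → x₂ - x₁ ≤ K * (u x₂ - u x₁))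
    (hv : MapsTo v t s) (huv : RightInvOn v u t) : LipschitzOnWith K v t := by
  refine LipschitzOnWith.of_dist_le_mul fun y₁ h₁ y₂ h₂ => ?_
  wlog h : v y₁ ≤ v y₂ generalizing y₁ y₂
  · rw [dist_comm, dist_comm y₁]
    exact this y₂ h₂ y₁ h₁ (le_of_not_ge h)
  have hle := hu _ (hv h₁) _ (hv h₂) h
  rw [huv h₁, huv h₂] at hle
  rw [Real.dist_eq, Real.dist_eq, abs_sub_comm, abs_of_nonneg (sub_nonneg.2 h)]
  exact hle.trans (mul_le_mul_of_nonneg_left ((le_abs_self _).trans (abs_sub_comm _ _).le)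
    K.coe_nonneg)

theorem MonotoneOn.strictMonoOn_rightInvOn (hu : MonotoneOn u s) (hv : MapsTo v t s)
    (huv : RightInvOn v u t) : StrictMonoOn v t := by
  intro y₁ h₁ y₂ h₂ h₁₂
  by_contra h
  have := hu (hv h₂) (hv h₁) (not_lt.1 h)
  rw [huv h₁, huv h₂] at this
  exact absurd h₁₂ (not_lt.2 this)

theorem LipschitzOnWith.sub_le_mul_sub_rightInvOn (hu : LipschitzOnWith K u s)
    (hv : MapsTo v t s) (hv_mono : MonotoneOn v t) (huv : RightInvOn v u t) :
    ∀ y₁ ∈ t, ∀ y₂ ∈ t, y₁ ≤ y₂ → y₂ - y₁ ≤ K * (v y₂ - v y₁) := by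
  intro y₁ h₁ y₂ h₂ h₁₂
  have hdist := hu.dist_le_mul _ (hv h₂) _ (hv h₁)
  rw [huv h₁, huv h₂, Real.dist_eq, Real.dist_eq, abs_of_nonneg (sub_nonneg.2 h₁₂),
    abs_of_nonneg (sub_nonneg.2 (hv_mono h₁ h₂ h₁₂))] at hdist
  exact hdist

variable {p q c : ℝ} {u' : ℝ → ℝ}

theorem LipschitzOnWith.strictMonoOn_of_le_deriv (hu : LipschitzOnWith K u (Icc p q))
    (hc : 0 < c) (hu' : ∀ᵐ x ∂volume.restrict (Icc p q), HasDerivAt u (u' x) x ∧ c ≤ u' x) :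
    StrictMonoOn u (Icc p q) := fun x₁ h₁ x₂ h₂ h₁₂ => by
  nlinarith [hu.mul_sub_le_sub hu' x₁ h₁ x₂ h₂ h₁₂.le]

theorem LipschitzOnWith.lipschitzOnWith_rightInvOn_of_le_deriv
    (hu : LipschitzOnWith K u (Icc p q)) (hc : 0 < c)
    (hu' : ∀ᵐ x ∂volume.restrict (Icc p q), HasDerivAt u (u' x) x ∧ c ≤ u' x)
    (hv : MapsTo v t (Icc p q)) (huv : RightInvOn v u t) :
    LipschitzOnWith (Real.toNNReal c⁻¹) v t := by
  refine lipschitzOnWith_rightInvOn_of_sub_le_mul_sub (fun x₁ h₁ x₂ h₂ h₁₂ => ?_) hv huv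
  rw [Real.coe_toNNReal _ (inv_nonneg.2 hc.le), inv_mul_eq_div, le_div_iff₀ hc, mul_comm]
  exact hu.mul_sub_le_sub hu' x₁ h₁ x₂ h₂ h₁₂

theorem LipschitzOnWith.ae_hasDerivAt_rightInvOn (hu : LipschitzOnWith K u (Icc p q))
    (hc : 0 < c) (hu' : ∀ᵐ x ∂volume.restrict (Icc p q), HasDerivAt u (u' x) x ∧ c ≤ u' x)
    {r r' : ℝ} (hv : ContinuousOn v (Icc r r')) (hmaps : MapsTo v (Icc r r') (Icc p q))
    (huv : RightInvOn v u (Icc r r')) :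
    ∀ᵐ y ∂volume.restrict (Icc r r'), HasDerivAt v (u' (v y))⁻¹ y ∧ c ≤ u' (v y) := by
  filter_upwards [hu.ae_restrict_comp_rightInvOn measurableSet_Icc measurableSet_Icc hmaps huv hu',
    ae_restrict_Icc_mem_nhds r r'] with y ⟨hd, hcy⟩ hy
  exact ⟨hd.of_local_left_inverse (hv.continuousAt hy) (hc.trans_le hcy).ne'
    (eventually_of_mem hy huv), hcy⟩

theorem HasDerivAt.mul_eq_one_of_leftInverse {d e y : ℝ} (hv : HasDerivAt v e (u y))
    (hu : HasDerivAt u d y) (hvu : ∀ᶠ z in 𝓝 y, v (u z) = z) : e * d = 1 :=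
  (hv.comp y hu).unique ((hasDerivAt_id y).congr_of_eventuallyEq hvu)

end Inverse

theorem integral_Icc_comp_neg (F : ℝ → ℝ) (b : ℝ) :
    ∫ y in Icc (-b) b, F (-y) = ∫ y in Icc (-b) b, F y := by
  have h := (Measure.measurePreserving_neg (volume : Measure ℝ)).setIntegral_preimage_emb
    (Homeomorph.neg ℝ).measurableEmbedding F (Icc (-b) b)
  simpa using h

theorem MeasureTheory.IntegrableOn.comp_neg_Icc {F : ℝ → ℝ} {b : ℝ}
    (hF : IntegrableOn F (Icc (-b) b)) :
    IntegrableOn (fun y => F (-y)) (Icc (-b) b) := by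
  have h := (Measure.measurePreserving_neg (volume : Measure ℝ)).integrableOn_comp_preimage
    (Homeomorph.neg ℝ).measurableEmbedding (f := F) (s := Icc (-b) b)
  simpa [Function.comp_def] using h.2 hF

theorem integral_Icc_add_comp_neg_div_two {F : ℝ → ℝ} {b : ℝ} (hF : IntegrableOn F (Icc (-b) b)) :
    ∫ y in Icc (-b) b, (F y + F (-y)) / 2 = ∫ y in Icc (-b) b, F y := by
  rw [integral_div, integral_add hF hF.comp_neg_Icc, integral_Icc_comp_neg]
  ring

theorem HasDerivAt.comp_neg {h : ℝ → ℝ} {d y : ℝ} (hh : HasDerivAt h d (-y)) :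
    HasDerivAt (fun z => h (-z)) (-d) y := by
  have := hh.comp y (hasDerivAt_neg y)
  rwa [mul_neg_one] at this

-- The function `g = (f⁻¹ + (f⁻¹)_*) / 2` of the statement is `oddPart f⁻¹`.
noncomputable def oddPart (h : ℝ → ℝ) (y : ℝ) : ℝ := (h y - h (-y)) / 2

section OddPart

variable {h : ℝ → ℝ} {a b : ℝ}

theorem mapsTo_oddPart (hh : MapsTo h (Icc (-b) b) (Icc (-a) a)) :
    MapsTo (oddPart h) (Icc (-b) b) (Icc (-a) a) := fun y hy => by
  have h₁ := hh hy
  have h₂ := hh (neg_mem_Icc_neg hy)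
  constructor <;> unfold oddPart <;> linarith [h₁.1, h₁.2, h₂.1, h₂.2]

theorem oddPart_sub_le_mul_sub {K : ℝ≥0}
    (hh : ∀ y₁ ∈ Icc (-b) b, ∀ y₂ ∈ Icc (-b) b, y₁ ≤ y₂ → y₂ - y₁ ≤ K * (h y₂ - h y₁)) :
    ∀ y₁ ∈ Icc (-b) b, ∀ y₂ ∈ Icc (-b) b, y₁ ≤ y₂ →
      y₂ - y₁ ≤ K * (oddPart h y₂ - oddPart h y₁) := by
  intro y₁ h₁ y₂ h₂ h₁₂
  have := hh y₁ h₁ y₂ h₂ h₁₂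
  have := hh (-y₂) (neg_mem_Icc_neg h₂) (-y₁) (neg_mem_Icc_neg h₁) (neg_le_neg h₁₂)
  unfold oddPart
  linarith

theorem ae_hasDerivAt_oddPart {h' : ℝ → ℝ}
    (hh : ∀ᵐ y ∂volume.restrict (Icc (-b) b), HasDerivAt h (h' y) y) :
    ∀ᵐ y ∂volume.restrict (Icc (-b) b), HasDerivAt (oddPart h) ((h' y + h' (-y)) / 2) y := by
  filter_upwards [hh, ae_restrict_Icc_comp_neg hh] with y hy hny
  have := (hy.sub hny.comp_neg).div_const 2
  rwa [sub_neg_eq_add] at this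

end OddPart

theorem LipschitzOnWith.odd_of_ae_hasDerivAt_even {K : ℝ≥0} {h h' : ℝ → ℝ} {b : ℝ}
    (hh : LipschitzOnWith K h (Icc (-b) b))
    (hh' : ∀ᵐ y ∂volume.restrict (Icc (-b) b), HasDerivAt h (h' y) y)
    (heven : ∀ᵐ y ∂volume.restrict (Icc (-b) b), h' (-y) = h' y) (hb : h (-b) = -h b) :
    ∀ y ∈ Icc (-b) b, h (-y) = -h y := by
  intro y hy
  have hbb : -b ≤ b := hy.1.trans hy.2
  have hneg : LipschitzOnWith K (fun z => h (-z)) (Icc (-b) b) := by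
    have := hh.comp LipschitzWith.id.neg.lipschitzOnWith fun z hz => neg_mem_Icc_neg hz
    rwa [mul_one] at this
  have hac : AbsolutelyContinuousOnInterval (fun z => h z + h (-z)) (-b) b :=
    (uIcc_of_le hbb ▸ hh.add hneg).absolutelyContinuousOnInterval
  have hderiv : ∀ᵐ z, z ∈ uIcc (-b) b → HasDerivAt (fun z => h z + h (-z)) 0 z := by
    rw [uIcc_of_le hbb, ← ae_restrict_iff' measurableSet_Icc]
    filter_upwards [hh', ae_restrict_Icc_comp_neg hh', heven] with z hz hnz hez
    have := hz.add hnz.comp_neg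
    rwa [hez, add_neg_cancel] at this
  obtain ⟨C, hC⟩ := hac.const_of_ae_hasDerivAt_zero hderiv
  have h₁ := hC y (uIcc_of_le hbb ▸ hy)
  have h₂ := hC b (by simp [hbb])
  linarith

-- For `φ = f' ∘ f⁻¹ = 1 / (f⁻¹)'` this is `1 / g'` with `g = oddPart f⁻¹`, i.e. the derivative of
-- the inverse `fᵒ` of `g`, taken at `g y`.
noncomputable def harmonicSymm (φ : ℝ → ℝ) (y : ℝ) : ℝ := (((φ y)⁻¹ + (φ (-y))⁻¹) / 2)⁻¹

section HarmonicSymm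

theorem inv_mean_inv_eq {p q : ℝ} (hp : 0 < p) (hq : 0 < q) :
    ((p⁻¹ + q⁻¹) / 2)⁻¹ = (p + q) / 2 - (p - q) ^ 2 / (2 * (p + q)) := by
  field_simp
  ring

theorem inv_mean_inv_le_mean {p q : ℝ} (hp : 0 < p) (hq : 0 < q) :
    ((p⁻¹ + q⁻¹) / 2)⁻¹ ≤ (p + q) / 2 := by
  rw [inv_mean_inv_eq hp hq]
  have : 0 ≤ (p - q) ^ 2 / (2 * (p + q)) := by positivity
  linarith

theorem inv_mean_inv_eq_mean_iff {p q : ℝ} (hp : 0 < p) (hq : 0 < q) :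
    ((p⁻¹ + q⁻¹) / 2)⁻¹ = (p + q) / 2 ↔ p = q := by
  rw [inv_mean_inv_eq hp hq, sub_eq_self, div_eq_zero_iff, sq_eq_zero_iff, sub_eq_zero]
  exact or_iff_left (by positivity)

variable {b : ℝ} {G φ : ℝ → ℝ}

theorem ae_harmonicSymm_mul_le (hGnn : ∀ y, 0 ≤ G y) (hGeven : ∀ y, G (-y) = G y)
    (hφ : ∀ᵐ y ∂volume.restrict (Icc (-b) b), 0 < φ y) :
    ∀ᵐ y ∂volume.restrict (Icc (-b) b),
      0 ≤ harmonicSymm φ y * G y ∧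
      harmonicSymm φ y * G y ≤ (φ y * G y + φ (-y) * G (-y)) / 2 := by
  filter_upwards [hφ, ae_restrict_Icc_comp_neg hφ] with y hy hny
  refine ⟨mul_nonneg (by unfold harmonicSymm; positivity) (hGnn y), ?_⟩
  rw [hGeven, ← add_mul, mul_div_right_comm]
  exact mul_le_mul_of_nonneg_right (inv_mean_inv_le_mean hy hny) (hGnn y)

theorem integral_harmonicSymm_mul_le (hGnn : ∀ y, 0 ≤ G y) (hGeven : ∀ y, G (-y) = G y)
    (hφ : ∀ᵐ y ∂volume.restrict (Icc (-b) b), 0 < φ y)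
    (hφG : IntegrableOn (fun y => φ y * G y) (Icc (-b) b)) :
    ∫ y in Icc (-b) b, harmonicSymm φ y * G y ≤ ∫ y in Icc (-b) b, φ y * G y := by
  rw [← integral_Icc_add_comp_neg_div_two hφG]
  have hle := ae_harmonicSymm_mul_le hGnn hGeven hφ
  exact integral_mono_of_nonneg (hle.mono fun y hy => hy.1)
    ((hφG.add hφG.comp_neg_Icc).div_const 2) (hle.mono fun y hy => hy.2)

theorem ae_neg_eq_of_integral_harmonicSymm_mul_eq (hGnn : ∀ y, 0 ≤ G y)
    (hGeven : ∀ y, G (-y) = G y) (hGpos : ∀ᵐ y ∂volume.restrict (Icc (-b) b), 0 < G y)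
    (hφ : ∀ᵐ y ∂volume.restrict (Icc (-b) b), 0 < φ y)
    (hφG : IntegrableOn (fun y => φ y * G y) (Icc (-b) b))
    (hψG : IntegrableOn (fun y => harmonicSymm φ y * G y) (Icc (-b) b))
    (heq : ∫ y in Icc (-b) b, harmonicSymm φ y * G y = ∫ y in Icc (-b) b, φ y * G y) :
    ∀ᵐ y ∂volume.restrict (Icc (-b) b), φ (-y) = φ y := by
  have hmean : IntegrableOn (fun y => (φ y * G y + φ (-y) * G (-y)) / 2) (Icc (-b) b) :=
    (hφG.add hφG.comp_neg_Icc).div_const 2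
  have hgap : ∫ y in Icc (-b) b,
      ((φ y * G y + φ (-y) * G (-y)) / 2 - harmonicSymm φ y * G y) = 0 := by
    rw [integral_sub hmean hψG, integral_Icc_add_comp_neg_div_two hφG, heq, sub_self]
  have hle := ae_harmonicSymm_mul_le hGnn hGeven hφ
  rw [integral_eq_zero_iff_of_nonneg_ae (hle.mono fun y hy => sub_nonneg.2 hy.2)
    (hmean.sub hψG)] at hgap
  filter_upwards [hgap, hGpos, hφ, ae_restrict_Icc_comp_neg hφ] with y hy hGy hφy hφny
  rw [Pi.zero_apply, hGeven, ← add_mul, mul_div_right_comm, ← sub_mul, mul_eq_zero,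
    sub_eq_zero] at hy
  exact ((inv_mean_inv_eq_mean_iff hφy hφny).1
    (hy.resolve_right hGy.ne').symm).symm

section OddRearrangement

variable {a b : ℝ} {h fo fo' φ : ℝ → ℝ} {K : ℝ≥0}

theorem rightInvOn_oddPart (hh : MapsTo h (Icc (-b) b) (Icc (-a) a))
    (hh_exp : ∀ y₁ ∈ Icc (-b) b, ∀ y₂ ∈ Icc (-b) b, y₁ ≤ y₂ → y₂ - y₁ ≤ K * (h y₂ - h y₁))
    (hfo : RightInvOn fo (oddPart h) (Icc (-a) a))
    (hfo_maps : MapsTo fo (Icc (-a) a) (Icc (-b) b)) :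
    RightInvOn (oddPart h) fo (Icc (-b) b) := fun _ hy =>
  (strictMonoOn_of_sub_le_mul_sub (oddPart_sub_le_mul_sub hh_exp)).injOn
    (hfo_maps (mapsTo_oddPart hh hy)) hy (hfo (mapsTo_oddPart hh hy))

theorem ae_deriv_comp_oddPart_eq_harmonicSymm (hh : MapsTo h (Icc (-b) b) (Icc (-a) a))
    (hh' : ∀ᵐ y ∂volume.restrict (Icc (-b) b), HasDerivAt h (φ y)⁻¹ y)
    (hfo_lip : LipschitzOnWith K fo (Icc (-a) a)) (hfog : RightInvOn (oddPart h) fo (Icc (-b) b))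
    (hfo' : ∀ᵐ x ∂volume.restrict (Icc (-a) a), HasDerivAt fo (fo' x) x) :
    ∀ᵐ y ∂volume.restrict (Icc (-b) b), fo' (oddPart h y) = harmonicSymm φ y := by
  filter_upwards [ae_hasDerivAt_oddPart hh', ae_restrict_Icc_mem_nhds (-b) b,
    hfo_lip.ae_restrict_comp_rightInvOn measurableSet_Icc measurableSet_Icc (mapsTo_oddPart hh)
      hfog hfo'] with y hg hy hfo
  exact eq_inv_of_mul_eq_one_left (hfo.mul_eq_one_of_leftInverse hg (eventually_of_mem hy hfog))

theorem oddRearrangement_energy_eq_integral_harmonicSymm (hab : -a ≤ a)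
    (hh : MapsTo h (Icc (-b) b) (Icc (-a) a))
    (hh_exp : ∀ y₁ ∈ Icc (-b) b, ∀ y₂ ∈ Icc (-b) b, y₁ ≤ y₂ → y₂ - y₁ ≤ K * (h y₂ - h y₁))
    (hhb : h b = a) (hhnb : h (-b) = -a)
    (hh' : ∀ᵐ y ∂volume.restrict (Icc (-b) b), HasDerivAt h (φ y)⁻¹ y)
    (hfo : RightInvOn fo (oddPart h) (Icc (-a) a)) (hfo_maps : MapsTo fo (Icc (-a) a) (Icc (-b) b))
    (hfo' : ∀ᵐ x ∂volume.restrict (Icc (-a) a), HasDerivAt fo (fo' x) x)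
    {G : ℝ → ℝ} (hG : Continuous G) :
    IntegrableOn (fun y => harmonicSymm φ y * G y) (Icc (-b) b) ∧
      ∫ x in Icc (-a) a, fo' x ^ 2 * G (fo x) = ∫ y in Icc (-b) b, harmonicSymm φ y * G y := by
  have hfog := rightInvOn_oddPart hh hh_exp hfo hfo_maps
  have hfo_lip := lipschitzOnWith_rightInvOn_of_sub_le_mul_sub (oddPart_sub_le_mul_sub hh_exp)
    hfo_maps hfo
  have hg_mono := strictMonoOn_of_sub_le_mul_sub (oddPart_sub_le_mul_sub hh_exp)
  have hfo_mono := (hg_mono.monotoneOn.strictMonoOn_rightInvOn hfo_maps hfo).monotoneOn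
  have hb : -b ≤ b := (hfo_maps ⟨le_rfl, hab⟩).1.trans (hfo_maps ⟨le_rfl, hab⟩).2
  have hfo_Icc : Icc (fo (-a)) (fo a) = Icc (-b) b := by
    have hga : oddPart h b = a := by unfold oddPart; rw [hhb, hhnb]; ring
    have hgna : oddPart h (-b) = -a := by unfold oddPart; rw [neg_neg, hhb, hhnb]; ring
    rw [← hgna, ← hga, hfog ⟨le_rfl, hb⟩, hfog ⟨hb, le_rfl⟩]
  have hψ := ae_deriv_comp_oddPart_eq_harmonicSymm hh hh' hfo_lip hfog hfo'
  have hint := hfo_lip.integrableOn_deriv_comp_mul hab hfo_mono hfo' hfo hG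
  have heq := hfo_lip.integral_deriv_sq_mul_comp hab hfo_mono hfo' hfo G
  rw [hfo_Icc] at hint heq
  refine ⟨hint.congr_fun_ae ?_, heq.trans (integral_congr_ae ?_)⟩ <;>
  · filter_upwards [hψ] with y hy
    rw [hy]

theorem eqOn_of_odd_rightInvOn_oddPart {f : ℝ → ℝ} (hodd : ∀ y ∈ Icc (-b) b, h (-y) = -h y)
    (hhf : LeftInvOn h f (Icc (-a) a)) (hf : MapsTo f (Icc (-a) a) (Icc (-b) b))
    (hfog : RightInvOn (oddPart h) fo (Icc (-b) b)) : EqOn f fo (Icc (-a) a) := fun x hx => by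
  have : oddPart h (f x) = x := by
    unfold oddPart
    rw [hodd _ (hf hx), hhf hx]
    ring
  rw [← hfog (hf hx), this]

end OddRearrangement

theorem stmt10 (a : ℝ) (ha : 0 < a)
    (G : ℝ → ℝ) (hGc : Continuous G) (hGnn : ∀ y, 0 ≤ G y) (hGeven : ∀ y, G (-y) = G y)
    (f finv fo f' fo' : ℝ → ℝ) (c : ℝ) (hc : 0 < c) (Cf : NNReal)
    (hflip : LipschitzOnWith Cf f (Set.Icc (-a) a))
    (hf' : ∀ᵐ x ∂(volume.restrict (Set.Icc (-a) a)),
        HasDerivAt f (f' x) x ∧ c ≤ f' x)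
    (hfa : f (-a) = -(f a))
    (hinv1 : ∀ x ∈ Set.Icc (-a) a, finv (f x) = x)
    (hinv2 : ∀ y ∈ Set.Icc (-(f a)) (f a), f (finv y) = y)
    -- `fo` is the inverse of `g = (1/2) f⁻¹ + (1/2) (f⁻¹)_*`
    (hfo : ∀ x ∈ Set.Icc (-a) a, (finv (fo x) - finv (-(fo x))) / 2 = x)
    (hfomaps : ∀ x ∈ Set.Icc (-a) a, fo x ∈ Set.Icc (-(f a)) (f a))
    (hfo' : ∀ᵐ x ∂(volume.restrict (Set.Icc (-a) a)), HasDerivAt fo (fo' x) x) :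
    (∫ x in (-a)..a, (fo' x) ^ 2 * G (fo x)) ≤ (∫ x in (-a)..a, (f' x) ^ 2 * G (f x)) ∧
    ((∀ᵐ y ∂(volume.restrict (Set.Icc (-(f a)) (f a))), 0 < G y) →
      ((∫ x in (-a)..a, (fo' x) ^ 2 * G (fo x)) = (∫ x in (-a)..a, (f' x) ^ 2 * G (f x)) ↔
        ∀ x ∈ Set.Icc (-a) a, f x = fo x)) := by
  have haa : -a ≤ a := by linarith
  have hf_der : ∀ᵐ x ∂volume.restrict (Icc (-a) a), HasDerivAt f (f' x) x := hf'.mono fun _ h => h.1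
  have hf_mono := (hflip.strictMonoOn_of_le_deriv hc hf').monotoneOn
  have hI : Icc (f (-a)) (f a) = Icc (-(f a)) (f a) := by rw [hfa]
  have hfinv_maps : MapsTo finv (Icc (-(f a)) (f a)) (Icc (-a) a) :=
    hI ▸ LeftInvOn.mapsTo hinv1 (intermediate_value_Icc haa hflip.continuousOn)
  have hfinv_lip := hflip.lipschitzOnWith_rightInvOn_of_le_deriv hc hf' hfinv_maps hinv2
  have hfinv' := hflip.ae_hasDerivAt_rightInvOn hc hf' hfinv_lip.continuousOn hfinv_maps hinv2
  have hφ : ∀ᵐ y ∂volume.restrict (Icc (-(f a)) (f a)), 0 < f' (finv y) :=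
    hfinv'.mono fun _ h => hc.trans_le h.2
  have hfinv_exp := hflip.sub_le_mul_sub_rightInvOn hfinv_maps
    (hf_mono.strictMonoOn_rightInvOn hfinv_maps hinv2).monotoneOn hinv2
  have hfinv_a : finv (f a) = a := hinv1 a ⟨haa, le_rfl⟩
  have hfinv_na : finv (-(f a)) = -a := hfa ▸ hinv1 (-a) ⟨le_rfl, haa⟩
  obtain ⟨hIfo, hEfo⟩ := oddRearrangement_energy_eq_integral_harmonicSymm haa hfinv_maps hfinv_exp
    hfinv_a hfinv_na (hfinv'.mono fun _ h => h.1) hfo hfomaps hfo' hGc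
  have hIf := hflip.integrableOn_deriv_comp_mul haa hf_mono hf_der hinv1 hGc
  have hEf := hflip.integral_deriv_sq_mul_comp haa hf_mono hf_der hinv1 G
  rw [hI] at hIf hEf
  simp only [intervalIntegral.integral_of_le haa, ← integral_Icc_eq_integral_Ioc]
  refine ⟨hEfo ▸ hEf ▸ integral_harmonicSymm_mul_le hGnn hGeven hφ hIf,
    fun hGpos => ⟨fun heq => ?_, fun hfo_eq => setIntegral_deriv_sq_mul_comp_congr
      (fun x hx => (hfo_eq x hx).symm) hfo' hf_der G⟩⟩
  have hφ_even := ae_neg_eq_of_integral_harmonicSymm_mul_eq hGnn hGeven hGpos hφ hIf hIfo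
    (hEfo ▸ hEf ▸ heq)
  have hodd := hfinv_lip.odd_of_ae_hasDerivAt_even (hfinv'.mono fun _ h => h.1)
    (hφ_even.mono fun y hy => by rw [hy]) (by rw [hfinv_na, hfinv_a])
  exact eqOn_of_odd_rightInvOn_oddPart hodd hinv1 (hI ▸ hf_mono.mapsTo_Icc)
    (rightInvOn_oddPart hfinv_maps hfinv_exp hfo hfomaps)
end HarmonicSymm
end

section
/- Let γ > 0 and K_{e≤γ} = {(ρ,v,m,e) : |ρ| ≤ 1, m = ρv, |v|² = e ≤ γ} ⊂ ℝ × ℝ^d × ℝ^d × ℝ with d ≥ 2. If z = (ρ, 0, m, e) satisfies |ρ| < 1, |m|² < e(1−ρ²) and 4|m|²/(1−ρ²)² + e < γ, then z lies in the interior of the convex hull of K_{e≤γ}. -/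
/-!
For `|ρ| < 1` a point `z = (ρ, v, m, e)` splits as
`z = (1+ρ)/2 • (1, a, a, ‖a‖² + t) + (1-ρ)/2 • (-1, b, -b, ‖b‖² + t)` with
`a = (v+m)/(1+ρ)`, `b = (v-m)/(1-ρ)` and `t = e - ((1+ρ)/2 ‖a‖² + (1-ρ)/2 ‖b‖²)`.
In dimension at least two there is a unit vector `w ⟂ a`, and `(1, a, a, ‖a‖² + t)` is the
midpoint of the points `(1, c, c, ‖c‖²)` with `c = a ± √t w`, which lie in `K_{e≤γ}` as soon as
`t ≥ 0` and `‖a‖² + t ≤ γ`; likewise for `b`. At `z = (ρ, 0, m, e)` the hypotheses give these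
conditions strictly, and `a`, `b`, `t` are continuous near `z`, so a whole neighbourhood of `z`
lies in the convex hull.
-/

open scoped RealInnerProductSpace
open Filter Topology Module

variable {E : Type*} [NormedAddCommGroup E] [InnerProductSpace ℝ E]

lemma exists_norm_eq_one_inner_eq_zero (hE : 2 ≤ finrank ℝ E) (a : E) :
    ∃ w : E, ‖w‖ = 1 ∧ ⟪a, w⟫ = 0 := by
  have : FiniteDimensional ℝ E := .of_finrank_pos (by omega)
  let K : Submodule ℝ E := ℝ ∙ a
  have : Nontrivial Kᗮ := by
    apply nontrivial_of_finrank_pos (R := ℝ)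
    have hK : finrank ℝ K ≤ 1 := by simpa using finrank_span_le_card ({a} : Set E)
    have := K.finrank_add_finrank_orthogonal
    omega
  obtain ⟨w, hw⟩ : ∃ w : Kᗮ, w ≠ 0 := exists_ne 0
  refine ⟨(‖(w : E)‖⁻¹ : ℝ) • (w : E), norm_smul_inv_norm (by simpa using hw), ?_⟩
  rw [real_inner_smul_right, Submodule.mem_orthogonal_singleton_iff_inner_right.mp w.2, mul_zero]

variable (E) in
/-- The set `K_{e≤γ}`, with points written `(ρ, v, m, e)`. -/
def constraintSet (γ : ℝ) : Set (ℝ × E × E × ℝ) :=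
  {p | |p.1| ≤ 1 ∧ p.2.2.1 = p.1 • p.2.1 ∧ ‖p.2.1‖ ^ 2 = p.2.2.2 ∧ p.2.2.2 ≤ γ}

lemma mk_smul_mem_convexHull_constraintSet {γ σ t : ℝ} {c w : E} (hσ : |σ| ≤ 1) (ht : 0 ≤ t)
    (hγ : ‖c‖ ^ 2 + t ≤ γ) (hw : ‖w‖ = 1) (hcw : ⟪c, w⟫ = 0) :
    (σ, c, σ • c, ‖c‖ ^ 2 + t) ∈ convexHull ℝ (constraintSet E γ) := by
  set s := √t
  have hnorm : ∀ ε : ℝ, ε ^ 2 = 1 → ‖c + (ε * s) • w‖ ^ 2 = ‖c‖ ^ 2 + t := by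
    intro ε hε
    rw [norm_add_sq_real, real_inner_smul_right, hcw, norm_smul, hw, Real.norm_eq_abs, mul_pow,
      sq_abs, mul_pow, hε, Real.sq_sqrt ht]
    ring
  have hmem : ∀ ε : ℝ, ε ^ 2 = 1 →
      (σ, c + (ε * s) • w, σ • (c + (ε * s) • w), ‖c + (ε * s) • w‖ ^ 2) ∈
        convexHull ℝ (constraintSet E γ) := fun ε hε =>
    subset_convexHull ℝ _ ⟨hσ, rfl, rfl, (hnorm ε hε).trans_le hγ⟩
  have hmid := convex_convexHull ℝ (constraintSet E γ) (hmem 1 (one_pow 2))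
    (hmem (-1) (by norm_num)) (by norm_num : (0 : ℝ) ≤ 1 / 2) (by norm_num : (0 : ℝ) ≤ 1 / 2)
    (by norm_num)
  convert hmid using 1
  simp only [Prod.smul_mk, Prod.mk_add_mk, smul_eq_mul, Prod.mk.injEq, hnorm 1 (one_pow 2),
    hnorm (-1) (by norm_num)]
  refine ⟨by ring, by module, by module, by ring⟩

noncomputable def upperVelocity (p : ℝ × E × E × ℝ) : E := (1 + p.1)⁻¹ • (p.2.1 + p.2.2.1)

noncomputable def lowerVelocity (p : ℝ × E × E × ℝ) : E := (1 - p.1)⁻¹ • (p.2.1 - p.2.2.1)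

noncomputable def energyGap (p : ℝ × E × E × ℝ) : ℝ :=
  p.2.2.2 - ((1 + p.1) / 2 * ‖upperVelocity p‖ ^ 2 + (1 - p.1) / 2 * ‖lowerVelocity p‖ ^ 2)

lemma mem_convexHull_constraintSet (hE : 2 ≤ finrank ℝ E) {γ : ℝ} {p : ℝ × E × E × ℝ}
    (hρ : |p.1| < 1) (hgap : 0 ≤ energyGap p) (hup : ‖upperVelocity p‖ ^ 2 + energyGap p ≤ γ)
    (hlow : ‖lowerVelocity p‖ ^ 2 + energyGap p ≤ γ) :
    p ∈ convexHull ℝ (constraintSet E γ) := by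
  obtain ⟨ρ, v, m, e⟩ := p
  obtain ⟨hρ₁, hρ₂⟩ : -1 < ρ ∧ ρ < 1 := abs_lt.mp hρ
  have hρ_add : 1 + ρ ≠ 0 := by linarith
  have hρ_sub : 1 - ρ ≠ 0 := by linarith
  set a := upperVelocity (ρ, v, m, e)
  set b := lowerVelocity (ρ, v, m, e)
  set t := energyGap (ρ, v, m, e)
  obtain ⟨w, hw, haw⟩ := exists_norm_eq_one_inner_eq_zero hE a
  obtain ⟨w', hw', hbw'⟩ := exists_norm_eq_one_inner_eq_zero hE b
  have hupper := mk_smul_mem_convexHull_constraintSet (σ := 1) (by simp) hgap hup hw haw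
  have hlower := mk_smul_mem_convexHull_constraintSet (σ := -1) (by simp) hgap hlow hw' hbw'
  have hcombo := convex_convexHull ℝ (constraintSet E γ) hupper hlower
    (by linarith : 0 ≤ (1 + ρ) / 2) (by linarith : 0 ≤ (1 - ρ) / 2) (by ring)
  convert hcombo using 1
  have ha : ((1 + ρ) / 2) • a = (1 / 2 : ℝ) • (v + m) := by
    simp only [a, upperVelocity, smul_smul]; congr 1; field_simp
  have hb : ((1 - ρ) / 2) • b = (1 / 2 : ℝ) • (v - m) := by
    simp only [b, lowerVelocity, smul_smul]; congr 1; field_simp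
  simp only [Prod.smul_mk, Prod.mk_add_mk, smul_eq_mul, Prod.mk.injEq, one_smul, neg_smul,
    smul_neg, ha, hb]
  refine ⟨by ring, by module, by module, ?_⟩
  simp only [t, energyGap]
  ring

lemma mem_interior_convexHull_constraintSet (hE : 2 ≤ finrank ℝ E) {γ : ℝ} {p : ℝ × E × E × ℝ}
    (hρ : |p.1| < 1) (hgap : 0 < energyGap p) (hup : ‖upperVelocity p‖ ^ 2 + energyGap p < γ)
    (hlow : ‖lowerVelocity p‖ ^ 2 + energyGap p < γ) :
    p ∈ interior (convexHull ℝ (constraintSet E γ)) := by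
  obtain ⟨hρ₁, hρ₂⟩ := abs_lt.mp hρ
  have hρ_add : 1 + p.1 ≠ 0 := by linarith
  have hρ_sub : 1 - p.1 ≠ 0 := by linarith
  have hcont_up : ContinuousAt (upperVelocity (E := E)) p := by
    unfold upperVelocity; fun_prop (disch := assumption)
  have hcont_low : ContinuousAt (lowerVelocity (E := E)) p := by
    unfold lowerVelocity; fun_prop (disch := assumption)
  have hcont_gap : ContinuousAt (energyGap (E := E)) p := by
    unfold energyGap; fun_prop
  refine mem_interior_iff_mem_nhds.2 ?_
  filter_upwards [continuous_fst.abs.continuousAt.eventually_lt continuousAt_const hρ,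
    continuousAt_const.eventually_lt hcont_gap hgap,
    ((hcont_up.norm.pow 2).add hcont_gap).eventually_lt continuousAt_const hup,
    ((hcont_low.norm.pow 2).add hcont_gap).eventually_lt continuousAt_const hlow]
    with q hρq hgapq hupq hlowq
  exact mem_convexHull_constraintSet hE hρq hgapq.le hupq.le hlowq.le

section ZeroVelocity

variable {ρ e : ℝ} {m : E}

lemma norm_upperVelocity_sq_zero_velocity :
    ‖upperVelocity (ρ, (0 : E), m, e)‖ ^ 2 = ‖m‖ ^ 2 / (1 + ρ) ^ 2 := by
  simp [upperVelocity, norm_smul, mul_pow, div_eq_inv_mul]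

lemma norm_lowerVelocity_sq_zero_velocity :
    ‖lowerVelocity (ρ, (0 : E), m, e)‖ ^ 2 = ‖m‖ ^ 2 / (1 - ρ) ^ 2 := by
  simp [lowerVelocity, norm_smul, mul_pow, div_eq_inv_mul]

lemma energyGap_zero_velocity (hρ : |ρ| < 1) :
    energyGap (ρ, (0 : E), m, e) = e - ‖m‖ ^ 2 / (1 - ρ ^ 2) := by
  obtain ⟨hρ₁, hρ₂⟩ := abs_lt.mp hρ
  have hρ_add : 1 + ρ ≠ 0 := by linarith
  have hρ_sub : 1 - ρ ≠ 0 := by linarith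
  have hq : 1 - ρ ^ 2 ≠ 0 := by nlinarith
  rw [energyGap, norm_upperVelocity_sq_zero_velocity, norm_lowerVelocity_sq_zero_velocity]
  field_simp
  ring

end ZeroVelocity

lemma div_one_add_sq_sub_div_le {ρ M : ℝ} (hρ : |ρ| < 1) (hM : 0 ≤ M) :
    M / (1 + ρ) ^ 2 - M / (1 - ρ ^ 2) ≤ 4 * M / (1 - ρ ^ 2) ^ 2 := by
  obtain ⟨hρ₁, hρ₂⟩ := abs_lt.mp hρ
  have hρ_add : 1 + ρ ≠ 0 := by linarith
  have hρ_sub : 1 - ρ ≠ 0 := by linarith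
  have hq : 1 - ρ ^ 2 ≠ 0 := by nlinarith
  have hlhs : M / (1 + ρ) ^ 2 - M / (1 - ρ ^ 2) = 2 * ρ * (ρ - 1) * M / (1 - ρ ^ 2) ^ 2 := by
    field_simp
    ring
  rw [hlhs]
  gcongr
  nlinarith

theorem stmt19_general (d : ℕ) (hd : 2 ≤ d) (γ : ℝ)
    (ρ e : ℝ) (m : EuclideanSpace ℝ (Fin d))
    (hρ : |ρ| < 1) (hme : ‖m‖ ^ 2 < e * (1 - ρ ^ 2))
    (hγ' : 4 * ‖m‖ ^ 2 / (1 - ρ ^ 2) ^ 2 + e < γ) :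
    (ρ, (0 : EuclideanSpace ℝ (Fin d)), m, e) ∈
      interior (convexHull ℝ
        {p : ℝ × EuclideanSpace ℝ (Fin d) × EuclideanSpace ℝ (Fin d) × ℝ |
          |p.1| ≤ 1 ∧ p.2.2.1 = p.1 • p.2.1 ∧ ‖p.2.1‖ ^ 2 = p.2.2.2 ∧ p.2.2.2 ≤ γ}) := by
  have hE : 2 ≤ finrank ℝ (EuclideanSpace ℝ (Fin d)) := by simpa using hd
  have hq : 0 < 1 - ρ ^ 2 := by nlinarith [abs_lt.mp hρ]
  have hneg : |-ρ| < 1 := by rwa [abs_neg]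
  have hup := div_one_add_sq_sub_div_le hρ (sq_nonneg ‖m‖)
  have hlow := div_one_add_sq_sub_div_le hneg (sq_nonneg ‖m‖)
  rw [neg_sq, ← sub_eq_add_neg] at hlow
  refine mem_interior_convexHull_constraintSet hE hρ ?_ ?_ ?_ <;>
    rw [energyGap_zero_velocity hρ]
  · rwa [sub_pos, div_lt_iff₀ hq]
  · rw [norm_upperVelocity_sq_zero_velocity]; linarith
  · rw [norm_lowerVelocity_sq_zero_velocity]; linarith

theorem stmt19 (d : ℕ) (hd : 2 ≤ d) (γ : ℝ) (hγ : 0 < γ)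
    (ρ e : ℝ) (m : EuclideanSpace ℝ (Fin d))
    (hρ : |ρ| < 1) (hme : ‖m‖ ^ 2 < e * (1 - ρ ^ 2))
    (hγ' : 4 * ‖m‖ ^ 2 / (1 - ρ ^ 2) ^ 2 + e < γ) :
    (ρ, (0 : EuclideanSpace ℝ (Fin d)), m, e) ∈
      interior (convexHull ℝ
        {p : ℝ × EuclideanSpace ℝ (Fin d) × EuclideanSpace ℝ (Fin d) × ℝ |
          |p.1| ≤ 1 ∧ p.2.2.1 = p.1 • p.2.1 ∧ ‖p.2.1‖ ^ 2 = p.2.2.2 ∧ p.2.2.2 ≤ γ}) :=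
  stmt19_general d hd γ ρ e m hρ hme hγ'
end
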